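/- Let λ ≠ 0. The critical points of the polynomial function f(x,y,z) = x³ − xz² − y²z + λx² are exactly the two points (0,0,0) and (−2λ/3, 0, 0); the critical value f(−2λ/3, 0, 0) equals 4λ³/27; the Hessian matrix of f at (0,0,0) equals diag(2λ, 0, 0) (rank 1), and the Hessian matrix at (−2λ/3, 0, 0) equals diag(−2λ, 0, 4λ/3) (rank 2). -/

import Mathlib

/-!
The gradient of f is (3x² − z² + 2λx, −2yz, −2xz − y²). On its zero set z vanishes, because
z⁴ = −z²·f_x + (3x + 2λ)(y f_y / 4 − z f_z / 2); then f_z = −y² forces y = 0, and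
f_x = x(3x + 2λ) leaves the two points. The Hessians are read off the second partials.
-/

open MvPolynomial Matrix

/-- The Hessian matrix of a polynomial in three real variables at a point. -/
noncomputable def hess3 (f : MvPolynomial (Fin 3) ℝ) (p : Fin 3 → ℝ) :
    Matrix (Fin 3) (Fin 3) ℝ :=
  Matrix.of fun i j => eval p (pderiv i (pderiv j f))

/-- A point of ℝ³ is a critical point of a polynomial in three variables if all three
partial derivatives vanish there. -/
def IsCriticalPt3 (f : MvPolynomial (Fin 3) ℝ) (p : Fin 3 → ℝ) : Prop :=
  ∀ i, eval p (pderiv i f) = 0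

/-- The polynomial f(x,y,z) = x³ − xz² − y²z + λx². -/
noncomputable def fD5A3 (lam : ℝ) : MvPolynomial (Fin 3) ℝ :=
  X 0 ^ 3 - X 0 * X 2 ^ 2 - X 1 ^ 2 * X 2 + C lam * X 0 ^ 2

theorem Derivation.map_ofNat {R A M : Type*} [CommSemiring R] [CommSemiring A] [AddCommMonoid M]
    [Algebra R A] [Module A M] [Module R M] (D : Derivation R A M) (n : ℕ) [n.AtLeastTwo] :
    D (OfNat.ofNat n : A) = 0 := by
  rw [← Nat.cast_ofNat]
  exact D.map_natCast n

theorem Matrix.vec3_eq_iff {α : Type*} (p : Fin 3 → α) (a b c : α) :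
    p = ![a, b, c] ↔ p 0 = a ∧ p 1 = b ∧ p 2 = c := by
  simp [funext_iff, Fin.forall_fin_succ]

theorem critical_equations_fD5A3_iff {K : Type*} [Field K] [CharZero K] (lam x y z : K) :
    (3 * x ^ 2 - z ^ 2 + 2 * lam * x = 0 ∧ -(2 * y * z) = 0 ∧ -(2 * x * z) - y ^ 2 = 0) ↔
      (x = 0 ∧ y = 0 ∧ z = 0) ∨ (x = -2 * lam / 3 ∧ y = 0 ∧ z = 0) := by
  constructor
  · rintro ⟨hx, hy, hz⟩
    have hz0 : z = 0 := by
      have hz4 : z ^ 4 = 0 := by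
        linear_combination (-z ^ 2) * hx + (3 * x + 2 * lam) * (y / 4) * hy
          + (3 * x + 2 * lam) * (-z / 2) * hz
      exact pow_eq_zero_iff (by norm_num) |>.1 hz4
    subst hz0
    have hy0 : y = 0 := pow_eq_zero_iff two_ne_zero |>.1 (by linear_combination -hz)
    have hx0 : x * (3 * x + 2 * lam) = 0 := by linear_combination hx
    rcases mul_eq_zero.1 hx0 with hx0 | hx0
    · exact Or.inl ⟨hx0, hy0, rfl⟩
    · exact Or.inr ⟨by linear_combination hx0 / 3, hy0, rfl⟩
  · rintro (⟨rfl, rfl, rfl⟩ | ⟨rfl, rfl, rfl⟩) <;> refine ⟨by ring, by ring, by ring⟩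

section fD5A3

variable (lam : ℝ)

theorem pderiv_zero_fD5A3 :
    pderiv 0 (fD5A3 lam) = 3 * X 0 ^ 2 - X 2 ^ 2 + 2 * C lam * X 0 := by
  simp [fD5A3]
  ring

theorem pderiv_one_fD5A3 : pderiv 1 (fD5A3 lam) = -(2 * X 1 * X 2) := by
  simp [fD5A3]
  ring

theorem pderiv_two_fD5A3 : pderiv 2 (fD5A3 lam) = -(2 * X 0 * X 2) - X 1 ^ 2 := by
  simp [fD5A3]
  ring

theorem isCriticalPt3_fD5A3_iff (p : Fin 3 → ℝ) :
    IsCriticalPt3 (fD5A3 lam) p ↔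
      3 * p 0 ^ 2 - p 2 ^ 2 + 2 * lam * p 0 = 0 ∧ -(2 * p 1 * p 2) = 0 ∧
        -(2 * p 0 * p 2) - p 1 ^ 2 = 0 := by
  simp [IsCriticalPt3, Fin.forall_fin_succ, pderiv_zero_fD5A3, pderiv_one_fD5A3,
    pderiv_two_fD5A3]

theorem hess3_fD5A3 (x y z : ℝ) :
    hess3 (fD5A3 lam) ![x, y, z] =
      !![6 * x + 2 * lam, 0, -2 * z;
         0, -2 * z, -2 * y;
         -2 * z, -2 * y, -2 * x] := by
  ext i j
  fin_cases i <;> fin_cases j <;>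
    simp [hess3, pderiv_zero_fD5A3, pderiv_one_fD5A3, pderiv_two_fD5A3,
      (pderiv _).map_ofNat] <;> ring

end fD5A3

/-- For λ ≠ 0, the critical points of x³ − xz² − y²z + λx² are exactly (0,0,0) and
(−2λ/3, 0, 0); the critical value at the latter is 4λ³/27; the Hessian at the origin
is diag(2λ,0,0) of rank 1, and the Hessian at (−2λ/3,0,0) is diag(−2λ,0,4λ/3) of
rank 2. -/
theorem critical_points_fD5A3 (lam : ℝ) (hlam : lam ≠ 0) :
    (∀ p : Fin 3 → ℝ, IsCriticalPt3 (fD5A3 lam) p ↔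
      p = ![0, 0, 0] ∨ p = ![-2 * lam / 3, 0, 0]) ∧
    eval ![-2 * lam / 3, 0, 0] (fD5A3 lam) = 4 * lam ^ 3 / 27 ∧
    hess3 (fD5A3 lam) ![0, 0, 0] = Matrix.diagonal ![2 * lam, 0, 0] ∧
    (hess3 (fD5A3 lam) ![0, 0, 0]).rank = 1 ∧
    hess3 (fD5A3 lam) ![-2 * lam / 3, 0, 0] =
      Matrix.diagonal ![-2 * lam, 0, 4 * lam / 3] ∧
    (hess3 (fD5A3 lam) ![-2 * lam / 3, 0, 0]).rank = 2 := by
  have hH0 : hess3 (fD5A3 lam) ![0, 0, 0] = diagonal ![2 * lam, 0, 0] := by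
    rw [hess3_fD5A3, diagonal_vec3]
    norm_num
  have hH1 : hess3 (fD5A3 lam) ![-2 * lam / 3, 0, 0] = diagonal ![-2 * lam, 0, 4 * lam / 3] := by
    have h00 : 6 * (-2 * lam / 3) + 2 * lam = -2 * lam := by ring
    have h22 : -2 * (-2 * lam / 3) = 4 * lam / 3 := by ring
    rw [hess3_fD5A3, diagonal_vec3, h00, h22]
    norm_num
  refine ⟨fun p => ?_, ?_, hH0, ?_, hH1, ?_⟩
  · rw [isCriticalPt3_fD5A3_iff, critical_equations_fD5A3_iff, vec3_eq_iff, vec3_eq_iff]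
  · simp [fD5A3]
    ring
  · rw [hH0, rank_diagonal, Fintype.card_subtype, Finset.card_filter, Fin.sum_univ_three]
    simp [hlam]
  · rw [hH1, rank_diagonal, Fintype.card_subtype, Finset.card_filter, Fin.sum_univ_three]
    simp [hlam]
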